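/- In an N-bidder second-price auction, consider the information structure that gives the lowest-value bidder i_* the signal (W, v̄), gives a highest-value bidder i^* ≠ i_* the signal (P, v_{i_*}), and gives all others the signal 0; let the strategy map (W, v̄) ↦ bid v̄, (P, m) ↦ bid m, and 0 ↦ bid 0. This is a Bayes Nash equilibrium; under it the item always goes to a minimal-value bidder at price v_{i_*} = min_j v_j, so revenue equals E[min_j v_j] and aggregate bidder surplus is 0. -/

import Mathlib

open scoped Classical BigOperators

/-- Highest coordinate. -/
noncomputable def maxVal {N : ℕ} (β : Fin N → ℝ) : ℝ := sSup (Set.range β)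

/-- Lowest coordinate. -/
noncomputable def minVal {N : ℕ} (β : Fin N → ℝ) : ℝ := sInf (Set.range β)

/-- Second-highest coordinate. -/
noncomputable def secmax {N : ℕ} (β : Fin N → ℝ) : ℝ :=
  sInf {x | ∃ i : Fin N, x = sSup {y | ∃ j : Fin N, j ≠ i ∧ y = β j}}

/-- Uniform tie-breaking winning share. -/
noncomputable def winShare {N : ℕ} (β : Fin N → ℝ) (i : Fin N) : ℝ :=
  if β i = maxVal β then
    1 / ((Finset.univ.filter fun j => β j = maxVal β).card : ℝ)
  else 0

/-- Probability of the state `(v, k, l)`: `k` is a uniformly tie-broken minimizer and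
`l ≠ k` a uniformly tie-broken maximizer (uniform over ordered pairs when all values
coincide). -/
noncomputable def wMinMax {N : ℕ} (lam : (Fin N → ℝ) → ℝ) (v : Fin N → ℝ)
    (k l : Fin N) : ℝ :=
  lam v *
    (if minVal v < maxVal v then
      (if v k = minVal v ∧ v l = maxVal v then
        1 / (((Finset.univ.filter fun i => v i = minVal v).card : ℝ) *
             ((Finset.univ.filter fun i => v i = maxVal v).card : ℝ))
       else 0)
     else
      (if k ≠ l then 1 / ((N : ℝ) * ((N : ℝ) - 1)) else 0))

/-- The signal of bidder `i` in state `(v, k, l)`: the lowest-value bidder `k` receives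
`(W, v̄)` encoded as `(1, v̄)`, the designated highest-value bidder `l` receives
`(P, min v)` encoded as `(2, min v)`, and everyone else receives `(0, 0)`. -/
noncomputable def sigMM {N : ℕ} (vbar : ℝ) (v : Fin N → ℝ) (k l i : Fin N) : ℝ × ℝ :=
  if i = k then (1, vbar) else if i = l then (2, minVal v) else (0, 0)

/-- The equilibrium strategy: `(W, v̄) ↦ v̄`, `(P, m) ↦ m`, `0 ↦ 0`. -/
noncomputable def stratMM (vbar : ℝ) (s : ℝ × ℝ) : ℝ :=
  if s.1 = 1 then vbar else if s.1 = 2 then s.2 else 0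

section auxMM
variable {N : ℕ}

lemma le_maxVal (β : Fin N → ℝ) (j : Fin N) : β j ≤ maxVal β :=
  le_csSup (Set.finite_range β).bddAbove ⟨j, rfl⟩

lemma maxVal_eq (β : Fin N → ℝ) (k : Fin N) (h : ∀ j, β j ≤ β k) : maxVal β = β k :=
  le_antisymm (csSup_le ⟨β k, k, rfl⟩ (by rintro x ⟨j, rfl⟩; exact h j)) (le_maxVal β k)

lemma minVal_le (β : Fin N → ℝ) (j : Fin N) : minVal β ≤ β j :=
  csInf_le (Set.finite_range β).bddBelow ⟨j, rfl⟩

lemma le_minVal (β : Fin N → ℝ) (k : Fin N) (c : ℝ) (h : ∀ j, c ≤ β j) : c ≤ minVal β :=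
  le_csInf ⟨β k, k, rfl⟩ (by rintro x ⟨j, rfl⟩; exact h j)

lemma exists_eq_maxVal [Nonempty (Fin N)] (β : Fin N → ℝ) : ∃ i, β i = maxVal β := by
  have h : maxVal β ∈ Set.range β :=
    Set.Nonempty.csSup_mem (Set.range_nonempty β) (Set.finite_range β)
  obtain ⟨i, hi⟩ := h
  exact ⟨i, hi⟩

lemma exists_eq_minVal [Nonempty (Fin N)] (β : Fin N → ℝ) : ∃ i, β i = minVal β := by
  have h : minVal β ∈ Set.range β :=
    Set.Nonempty.csInf_mem (Set.range_nonempty β) (Set.finite_range β)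
  obtain ⟨i, hi⟩ := h
  exact ⟨i, hi⟩

lemma Sfin (β : Fin N → ℝ) (i : Fin N) : ({y | ∃ j, j ≠ i ∧ y = β j} : Set ℝ).Finite :=
  (Set.finite_range β).subset (by rintro x ⟨j, -, rfl⟩; exact ⟨j, rfl⟩)

lemma le_secmax_two (β : Fin N → ℝ) (p q : Fin N) (hpq : p ≠ q) (c : ℝ)
    (hp : c ≤ β p) (hq : c ≤ β q) : c ≤ secmax β := by
  refine le_csInf ⟨_, p, rfl⟩ ?_
  rintro x ⟨i, rfl⟩
  rcases eq_or_ne i p with rfl | h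
  · exact le_trans hq (le_csSup (Sfin β i).bddAbove ⟨q, Ne.symm hpq, rfl⟩)
  · exact le_trans hp (le_csSup (Sfin β i).bddAbove ⟨p, Ne.symm h, rfl⟩)

lemma secmax_le_sup (β : Fin N → ℝ) (i : Fin N) :
    secmax β ≤ sSup {y | ∃ j, j ≠ i ∧ y = β j} := by
  have hset : {x | ∃ i : Fin N, x = sSup {y | ∃ j : Fin N, j ≠ i ∧ y = β j}}
      = Set.range (fun i : Fin N => sSup {y | ∃ j : Fin N, j ≠ i ∧ y = β j}) := by
    ext x; simp [eq_comm]
  refine csInf_le ?_ ⟨i, rfl⟩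
  rw [hset]
  exact (Set.finite_range _).bddBelow

lemma sup_others_le (β : Fin N → ℝ) (i j₀ : Fin N) (hj : j₀ ≠ i) (c : ℝ)
    (h : ∀ j, j ≠ i → β j ≤ c) : sSup {y | ∃ j, j ≠ i ∧ y = β j} ≤ c :=
  csSup_le ⟨β j₀, j₀, hj, rfl⟩ (by rintro x ⟨j, hji, rfl⟩; exact h j hji)

lemma winShare_nonneg (β : Fin N → ℝ) (i : Fin N) : 0 ≤ winShare β i := by
  unfold winShare; split <;> positivity

lemma winShare_ne (β : Fin N → ℝ) (i : Fin N) (h : winShare β i ≠ 0) : β i = maxVal β := by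
  by_contra hc
  apply h
  unfold winShare
  rw [if_neg hc]

lemma sum_winShare [Nonempty (Fin N)] (β : Fin N → ℝ) : ∑ i, winShare β i = 1 := by
  unfold winShare
  rw [← Finset.sum_filter, Finset.sum_const, nsmul_eq_mul]
  obtain ⟨i, hi⟩ := exists_eq_maxVal β
  have hcard : 0 < (Finset.univ.filter fun j => β j = maxVal β).card :=
    Finset.card_pos.mpr ⟨i, by simp [hi]⟩
  rw [mul_one_div, div_self (Nat.cast_ne_zero.mpr hcard.ne')]

lemma wMinMax_nonneg (hN : 2 ≤ N) (lam : (Fin N → ℝ) → ℝ) (v : Fin N → ℝ)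
    (hl : 0 ≤ lam v) (k l : Fin N) : 0 ≤ wMinMax lam v k l := by
  have h1 : (1:ℝ) ≤ (N:ℝ) := by exact_mod_cast Nat.one_le_of_lt hN
  unfold wMinMax
  refine mul_nonneg hl ?_
  have h2 : (0:ℝ) ≤ (N:ℝ) - 1 := by linarith
  split_ifs
  · positivity
  · exact le_refl 0
  · exact one_div_nonneg.mpr (mul_nonneg (by positivity) h2)
  · exact le_refl 0

lemma wMinMax_ne (lam : (Fin N → ℝ) → ℝ) (v : Fin N → ℝ) (k l : Fin N)
    (h : wMinMax lam v k l ≠ 0) : k ≠ l ∧ v k = minVal v := by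
  unfold wMinMax at h
  by_cases hlt : minVal v < maxVal v
  · rw [if_pos hlt] at h
    by_cases hc : v k = minVal v ∧ v l = maxVal v
    · refine ⟨?_, hc.1⟩
      rintro rfl
      exact absurd (hc.1.symm.trans hc.2) (ne_of_lt hlt)
    · rw [if_neg hc, mul_zero] at h; exact absurd rfl h
  · rw [if_neg hlt] at h
    by_cases hkl : k ≠ l
    · refine ⟨hkl, ?_⟩
      have h1 : maxVal v ≤ minVal v := le_of_not_gt hlt
      exact le_antisymm (le_trans (le_maxVal v k) h1) (minVal_le v k)
    · rw [if_neg hkl, mul_zero] at h; exact absurd rfl h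

lemma sum_wMinMax (hN : 2 ≤ N) (lam : (Fin N → ℝ) → ℝ) (v : Fin N → ℝ) :
    ∑ k : Fin N, ∑ l : Fin N, wMinMax lam v k l = lam v := by
  haveI : Nonempty (Fin N) := ⟨⟨0, by omega⟩⟩
  unfold wMinMax
  simp_rw [← Finset.mul_sum]
  by_cases hlt : minVal v < maxVal v
  · simp only [if_pos hlt]
    obtain ⟨i0, hi0⟩ := exists_eq_minVal v
    obtain ⟨i1, hi1⟩ := exists_eq_maxVal v
    set cm := (Finset.univ.filter fun i => v i = minVal v).card with hcm
    set cM := (Finset.univ.filter fun i => v i = maxVal v).card with hcM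
    have hcm0 : 0 < cm := Finset.card_pos.mpr ⟨i0, by simp [hi0]⟩
    have hcM0 : 0 < cM := Finset.card_pos.mpr ⟨i1, by simp [hi1]⟩
    have inner : ∀ k : Fin N, (∑ l : Fin N, if v k = minVal v ∧ v l = maxVal v then
        1 / ((cm:ℝ) * (cM:ℝ)) else 0)
        = if v k = minVal v then (cM : ℝ) * (1/((cm:ℝ)*(cM:ℝ))) else 0 := by
      intro k
      by_cases hk : v k = minVal v
      · rw [if_pos hk]
        simp only [hk, true_and]
        rw [← Finset.sum_filter, Finset.sum_const, nsmul_eq_mul]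
      · rw [if_neg hk]
        simp only [hk, false_and, if_false, Finset.sum_const_zero]
    rw [Finset.sum_congr rfl fun k _ => inner k]
    rw [← Finset.sum_filter, Finset.sum_const, nsmul_eq_mul]
    have hm : (cm:ℝ) ≠ 0 := Nat.cast_ne_zero.mpr hcm0.ne'
    have hM : (cM:ℝ) ≠ 0 := Nat.cast_ne_zero.mpr hcM0.ne'
    field_simp
    rfl
  · simp only [if_neg hlt]
    have inner : ∀ k : Fin N, (∑ l : Fin N, if k ≠ l then 1/((N:ℝ)*((N:ℝ)-1)) else 0)
        = ((N:ℝ)-1) * (1/((N:ℝ)*((N:ℝ)-1))) := by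
      intro k
      rw [← Finset.sum_filter, Finset.sum_const, nsmul_eq_mul]
      congr 1
      have he : (Finset.univ.filter fun l => k ≠ l) = Finset.univ.erase k := by
        ext x; simp [ne_comm, eq_comm]
      rw [he, Finset.card_erase_of_mem (Finset.mem_univ k), Finset.card_univ, Fintype.card_fin]
      push_cast [Nat.cast_sub (by omega : 1 ≤ N)]
      ring
    rw [Finset.sum_congr rfl fun k _ => inner k]
    rw [Finset.sum_const, nsmul_eq_mul, Finset.card_univ, Fintype.card_fin]
    have hN0 : (N:ℝ) ≠ 0 := Nat.cast_ne_zero.mpr (by omega)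
    have hN1 : (N:ℝ) - 1 ≠ 0 := by
      have : (2:ℝ) ≤ (N:ℝ) := by exact_mod_cast hN
      linarith
    field_simp

lemma betak (vbar : ℝ) (v : Fin N → ℝ) (k l : Fin N) :
    stratMM vbar (sigMM vbar v k l k) = vbar := by
  simp [sigMM, stratMM]

lemma betal (vbar : ℝ) (v : Fin N → ℝ) (k l : Fin N) (h : l ≠ k) :
    stratMM vbar (sigMM vbar v k l l) = minVal v := by
  simp [sigMM, stratMM, h]

lemma betao (vbar : ℝ) (v : Fin N → ℝ) (k l j : Fin N) (h1 : j ≠ k) (h2 : j ≠ l) :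
    stratMM vbar (sigMM vbar v k l j) = 0 := by
  simp [sigMM, stratMM, h1, h2]

end auxMM

/-- Minimum revenue with zero bidder surplus: the lowest-value bidder receives `(W, v̄)`,
a distinct highest-value bidder receives `(P, min v)`, everyone else `0`; the strategy
`(W, v̄) ↦ v̄`, `(P, m) ↦ m`, `0 ↦ 0` is a Bayes Nash equilibrium (against deviations in
`[0, v̄]`); the item always goes to a minimal-value bidder at price `min v`, so revenue
equals `E[min v]` and aggregate bidder surplus is `0`. -/
theorem min_welfare_zero_bidder_surplus (N : ℕ) (hN : 2 ≤ N) (vbar : ℝ)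
    (PV : Finset (Fin N → ℝ)) (lam : (Fin N → ℝ) → ℝ)
    (hl0 : ∀ v, 0 ≤ lam v) (hl1 : ∑ v ∈ PV, lam v = 1)
    (hsym : ∀ (τ : Equiv.Perm (Fin N)) (v : Fin N → ℝ), lam (v ∘ τ) = lam v)
    (hval : ∀ v ∈ PV, ∀ i, v i ∈ Set.Icc (0:ℝ) vbar) :
    -- (a) the strategy profile is a Bayes Nash equilibrium within bids in [0, v̄]
    (∀ i (d : ℝ × ℝ → ℝ), (∀ t, d t ∈ Set.Icc (0:ℝ) vbar) →
      (∑ v ∈ PV, ∑ k : Fin N, ∑ l : Fin N, wMinMax lam v k l *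
          (winShare (Function.update (fun j => stratMM vbar (sigMM vbar v k l j)) i
              (d (sigMM vbar v k l i))) i *
            (v i - secmax (Function.update (fun j => stratMM vbar (sigMM vbar v k l j)) i
              (d (sigMM vbar v k l i))))))
      ≤ ∑ v ∈ PV, ∑ k : Fin N, ∑ l : Fin N, wMinMax lam v k l *
          (winShare (fun j => stratMM vbar (sigMM vbar v k l j)) i *
            (v i - secmax (fun j => stratMM vbar (sigMM vbar v k l j))))) ∧
    -- (b) welfare equals the minimal welfare E[min v]
    (∑ v ∈ PV, ∑ k : Fin N, ∑ l : Fin N, wMinMax lam v k l *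
        ∑ i, winShare (fun j => stratMM vbar (sigMM vbar v k l j)) i * v i)
      = ∑ v ∈ PV, lam v * minVal v ∧
    -- (c) revenue equals E[min v]
    (∑ v ∈ PV, ∑ k : Fin N, ∑ l : Fin N, wMinMax lam v k l *
        secmax (fun j => stratMM vbar (sigMM vbar v k l j)))
      = ∑ v ∈ PV, lam v * minVal v ∧
    -- (d) aggregate bidder surplus is zero
    (∑ v ∈ PV, ∑ k : Fin N, ∑ l : Fin N, wMinMax lam v k l *
        ∑ i, winShare (fun j => stratMM vbar (sigMM vbar v k l j)) i *
          (v i - secmax (fun j => stratMM vbar (sigMM vbar v k l j))))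
      = 0 := by
  haveI : Nonempty (Fin N) := ⟨⟨0, by omega⟩⟩
  -- structural facts about the equilibrium bid profile
  have facts : ∀ v ∈ PV, ∀ k l : Fin N, k ≠ l → v k = minVal v →
      (maxVal (fun j => stratMM vbar (sigMM vbar v k l j)) = vbar ∧
       secmax (fun j => stratMM vbar (sigMM vbar v k l j)) = minVal v ∧
       ∀ i, stratMM vbar (sigMM vbar v k l i) = vbar → v i = minVal v) := by
    intro v hvPV k l hkl hk
    set β := fun j => stratMM vbar (sigMM vbar v k l j) with hβ
    have hbk : β k = vbar := betak vbar v k l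
    have hbl : β l = minVal v := betal vbar v k l (Ne.symm hkl)
    have hbo : ∀ j, j ≠ k → j ≠ l → β j = 0 := fun j h1 h2 => betao vbar v k l j h1 h2
    have hm0 : 0 ≤ minVal v := le_minVal v k 0 fun j => (hval v hvPV j).1
    have hmv : minVal v ≤ vbar := le_trans (minVal_le v k) (hval v hvPV k).2
    have hub : ∀ j, β j ≤ vbar := by
      intro j
      rcases eq_or_ne j k with rfl | h1
      · rw [hbk]
      rcases eq_or_ne j l with rfl | h2
      · rw [hbl]; exact hmv
      · rw [hbo j h1 h2]; exact le_trans hm0 hmv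
    have hmax : maxVal β = vbar := by
      rw [maxVal_eq β k (fun j => (hub j).trans_eq hbk.symm)]
      exact hbk
    have hsec : secmax β = minVal v := by
      refine le_antisymm ?_ ?_
      · refine le_trans (secmax_le_sup β k) (sup_others_le β k l (Ne.symm hkl) _ ?_)
        intro j hj
        rcases eq_or_ne j l with rfl | h2
        · rw [hbl]
        · rw [hbo j hj h2]; exact hm0
      · exact le_secmax_two β k l hkl _ (hbk ▸ hmv) (hbl ▸ le_refl _)
    refine ⟨hmax, hsec, ?_⟩
    intro i hi
    rcases eq_or_ne i k with rfl | h1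
    · exact hk
    rcases eq_or_ne i l with rfl | h2
    · have hbl' : minVal v = vbar := by rw [← hbl]; exact hi
      have hx : v i ≤ vbar := (hval v hvPV i).2
      have hy : minVal v ≤ v i := minVal_le v i
      linarith
    · have h0 : (0:ℝ) = vbar := by rw [← hbo i h1 h2]; exact hi
      have hx : v i ≤ vbar := (hval v hvPV i).2
      have hy : 0 ≤ v i := (hval v hvPV i).1
      have hvi0 : v i = 0 := le_antisymm (h0 ▸ hx) hy
      have hmin0 : minVal v = 0 := le_antisymm (h0 ▸ hmv) hm0
      rw [hvi0, hmin0]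
    -- end facts
  have key : ∀ v ∈ PV, ∀ k l : Fin N, wMinMax lam v k l ≠ 0 →
      k ≠ l ∧ v k = minVal v := fun v _ k l h => wMinMax_ne lam v k l h
  refine ⟨?_, ?_, ?_, ?_⟩
  -- (a)
  · intro i d hd
    have hR : (∑ v ∈ PV, ∑ k : Fin N, ∑ l : Fin N, wMinMax lam v k l *
          (winShare (fun j => stratMM vbar (sigMM vbar v k l j)) i *
            (v i - secmax (fun j => stratMM vbar (sigMM vbar v k l j))))) = 0 := by
      refine Finset.sum_eq_zero fun v hv => ?_
      refine Finset.sum_eq_zero fun k _ => ?_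
      refine Finset.sum_eq_zero fun l _ => ?_
      by_cases hw : wMinMax lam v k l = 0
      · rw [hw, zero_mul]
      · obtain ⟨hkl, hk⟩ := key v hv k l hw
        obtain ⟨hmax, hsec, hW⟩ := facts v hv k l hkl hk
        by_cases hws : winShare (fun j => stratMM vbar (sigMM vbar v k l j)) i = 0
        · rw [hws, zero_mul, mul_zero]
        · have hvi : v i = minVal v :=
            hW i ((winShare_ne _ i hws).trans hmax)
          rw [hsec, hvi, sub_self, mul_zero, mul_zero]
    rw [hR]
    refine Finset.sum_nonpos fun v hv => ?_
    refine Finset.sum_nonpos fun k _ => ?_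
    refine Finset.sum_nonpos fun l _ => ?_
    by_cases hw : wMinMax lam v k l = 0
    · rw [hw, zero_mul]
    · obtain ⟨hkl, hk⟩ := key v hv k l hw
      set β' := Function.update (fun j => stratMM vbar (sigMM vbar v k l j)) i
          (d (sigMM vbar v k l i)) with hβ'
      have hw0 : 0 ≤ wMinMax lam v k l := wMinMax_nonneg hN lam v (hl0 v) k l
      have hX : winShare β' i * (v i - secmax β') ≤ 0 := by
        by_cases hws : winShare β' i = 0
        · rw [hws, zero_mul]
        · have hwin : β' i = maxVal β' := winShare_ne β' i hws
          have hsle : v i ≤ secmax β' := by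
            rcases eq_or_ne i k with rfl | hik
            · -- deviator is the winner k
              have hbl' : β' l = minVal v := by
                rw [hβ', Function.update_of_ne (Ne.symm hkl)]
                exact betal vbar v i l (Ne.symm hkl)
              have h1 : minVal v ≤ β' i := by
                calc minVal v = β' l := hbl'.symm
                  _ ≤ maxVal β' := le_maxVal β' l
                  _ = β' i := hwin.symm
              rw [hk]
              exact le_secmax_two β' i l hkl _ h1 (hbl' ▸ le_refl _)
            rcases eq_or_ne i l with rfl | hil
            · -- deviator is the price-setter l
              have hbk' : β' k = vbar := by
                rw [hβ', Function.update_of_ne hkl]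
                exact betak vbar v k i
              have h1 : vbar ≤ β' i := by
                calc vbar = β' k := hbk'.symm
                  _ ≤ maxVal β' := le_maxVal β' k
                  _ = β' i := hwin.symm
              have hvle : v i ≤ vbar := (hval v hv i).2
              exact le_secmax_two β' k i hkl _ (hbk' ▸ hvle) (le_trans hvle h1)
            · -- deviator is an outsider
              have hbk' : β' k = vbar := by
                rw [hβ', Function.update_of_ne (Ne.symm hik)]
                exact betak vbar v k l
              have h1 : vbar ≤ β' i := by
                calc vbar = β' k := hbk'.symm
                  _ ≤ maxVal β' := le_maxVal β' k
                  _ = β' i := hwin.symm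
              have hvle : v i ≤ vbar := (hval v hv i).2
              exact le_secmax_two β' i k hik _ (le_trans hvle h1) (hbk' ▸ hvle)
          exact mul_nonpos_iff.mpr (Or.inl ⟨winShare_nonneg β' i, by linarith⟩)
      exact mul_nonpos_iff.mpr (Or.inl ⟨hw0, hX⟩)
  -- (b)
  · refine Finset.sum_congr rfl fun v hv => ?_
    have hgoal : (∑ k : Fin N, ∑ l : Fin N, wMinMax lam v k l) * minVal v
        = lam v * minVal v := by rw [sum_wMinMax hN]
    rw [Finset.sum_mul] at hgoal
    simp_rw [Finset.sum_mul] at hgoal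
    rw [← hgoal]
    refine Finset.sum_congr rfl fun k _ => ?_
    refine Finset.sum_congr rfl fun l _ => ?_
    by_cases hw : wMinMax lam v k l = 0
    · rw [hw, zero_mul, zero_mul]
    · obtain ⟨hkl, hk⟩ := key v hv k l hw
      obtain ⟨hmax, hsec, hW⟩ := facts v hv k l hkl hk
      congr 1
      set β := fun j => stratMM vbar (sigMM vbar v k l j) with hβ
      calc ∑ i, winShare β i * v i = ∑ i, winShare β i * minVal v := by
            refine Finset.sum_congr rfl fun i _ => ?_
            by_cases h : winShare β i = 0
            · rw [h, zero_mul, zero_mul]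
            · rw [hW i ((winShare_ne β i h).trans hmax)]
        _ = (∑ i, winShare β i) * minVal v := by rw [Finset.sum_mul]
        _ = minVal v := by rw [sum_winShare, one_mul]
  -- (c)
  · refine Finset.sum_congr rfl fun v hv => ?_
    have hgoal : (∑ k : Fin N, ∑ l : Fin N, wMinMax lam v k l) * minVal v
        = lam v * minVal v := by rw [sum_wMinMax hN]
    rw [Finset.sum_mul] at hgoal
    simp_rw [Finset.sum_mul] at hgoal
    rw [← hgoal]
    refine Finset.sum_congr rfl fun k _ => ?_
    refine Finset.sum_congr rfl fun l _ => ?_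
    by_cases hw : wMinMax lam v k l = 0
    · rw [hw, zero_mul, zero_mul]
    · obtain ⟨hkl, hk⟩ := key v hv k l hw
      obtain ⟨hmax, hsec, hW⟩ := facts v hv k l hkl hk
      rw [hsec]
  -- (d)
  · refine Finset.sum_eq_zero fun v hv => ?_
    refine Finset.sum_eq_zero fun k _ => ?_
    refine Finset.sum_eq_zero fun l _ => ?_
    by_cases hw : wMinMax lam v k l = 0
    · rw [hw, zero_mul]
    · obtain ⟨hkl, hk⟩ := key v hv k l hw
      obtain ⟨hmax, hsec, hW⟩ := facts v hv k l hkl hk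
      have : (∑ i, winShare (fun j => stratMM vbar (sigMM vbar v k l j)) i *
          (v i - secmax (fun j => stratMM vbar (sigMM vbar v k l j)))) = 0 := by
        refine Finset.sum_eq_zero fun i _ => ?_
        by_cases h : winShare (fun j => stratMM vbar (sigMM vbar v k l j)) i = 0
        · rw [h, zero_mul]
        · rw [hsec, hW i ((winShare_ne _ i h).trans hmax), sub_self, mul_zero]
      rw [this, mul_zero]
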